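/- Let P be an effectively closed (Π⁰₁) subset of Cantor space of positive measure. If X is a Martin-Löf random infinite binary sequence, then some tail of X (i.e., the sequence Y with Y(n) = X(n+k) for some k) belongs to P. -/

import Mathlib

open MeasureTheory ENNReal

/-! ### Cantor space and the uniform (coin-flipping) measure -/

/-- The binary digits of a real number in `[0,1)`, giving a point of Cantor space. -/
noncomputable def binaryDigits (x : ℝ) : ℕ → Bool :=
  fun n => decide (⌊x * 2 ^ (n + 1)⌋ % 2 = 1)

/-- The uniform (Lebesgue / coin-flipping) measure on Cantor space `2^ω`,
obtained as the pushforward of Lebesgue measure on `[0,1)` under binary expansion. -/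
noncomputable def μCantor : Measure (ℕ → Bool) :=
  Measure.map binaryDigits (volume.restrict (Set.Ico (0 : ℝ) 1))

/-- `σ` is an initial segment of the infinite sequence `X`. -/
def IsPrefixOf (σ : List Bool) (X : ℕ → Bool) : Prop :=
  ∀ i : Fin σ.length, X i = σ.get i

/-- The cylinder determined by a finite binary string. -/
def cylinder (σ : List Bool) : Set (ℕ → Bool) := {X | IsPrefixOf σ X}

/-- The open set generated by a set of finite binary strings. -/
def openOf (S : Set (List Bool)) : Set (ℕ → Bool) := ⋃ σ ∈ S, cylinder σ

/-- The density of a set `P` above the string `τ`: `μ([τ] ∩ P) · 2^{|τ|}`. -/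
noncomputable def dens (τ : List Bool) (P : Set (ℕ → Bool)) : ℝ≥0∞ :=
  μCantor (cylinder τ ∩ P) * 2 ^ τ.length

/-- The length-`n` initial segment of `X`, as a finite binary string. -/
def strPrefix (X : ℕ → Bool) (n : ℕ) : List Bool := (List.range n).map X

/-- A set of strings is prefix-free if no element is a proper prefix of another. -/
def PrefixFreeSet (S : Set (List Bool)) : Prop :=
  ∀ σ ∈ S, ∀ τ ∈ S, σ <+: τ → σ = τ

/-- The weight `∑_{σ ∈ S} 2^{-|σ|}` of a set of strings. -/
noncomputable def weight (S : Set (List Bool)) : ℝ≥0∞ :=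
  ∑' σ : S, 2⁻¹ ^ (σ : List Bool).length

/-- A set of strings is bounded if its weight is finite. -/
def BoundedStr (S : Set (List Bool)) : Prop := weight S < ⊤

/-- The tail `X(·+k)` of an infinite binary sequence. -/
def tailSeq (X : ℕ → Bool) (k : ℕ) : ℕ → Bool := fun n => X (n + k)

/-! ### Oracle computability -/

/-- The `e`-th computably enumerable set of naturals (the domain of the `e`-th
partial computable function). -/
def WEnum (e n : ℕ) : Prop := ((Denumerable.ofNat Nat.Partrec.Code e).eval n).Dom

/-- `OracleComputes e X n m` holds if the `e`-th Turing functional with oracle `X`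
outputs `m` on input `n`; a Turing functional is presented by the c.e. set `W_e`
of coded axioms `(σ, n, m)`, and `Γ_e^X(n) = m` iff some initial segment `σ` of `X`
has `(σ, n, m) ∈ W_e`. -/
def OracleComputes (e : ℕ) (X : ℕ → Bool) (n m : ℕ) : Prop :=
  ∃ σ : List Bool, IsPrefixOf σ X ∧
    WEnum e (Nat.pair (Encodable.encode σ) (Nat.pair n m))

def natOfBool (b : Bool) : ℕ := cond b 1 0

/-- `f : ℕ → ℕ` is computable with oracle `A`: some Turing functional with oracle `A`
has graph exactly `f`. -/
def FnComputableIn (f : ℕ → ℕ) (A : ℕ → Bool) : Prop :=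
  ∃ e, ∀ n m, OracleComputes e A n m ↔ m = f n

/-- Turing reducibility `B ≤_T A` for subsets of `ω` (as elements of Cantor space). -/
def TuringLE (B A : ℕ → Bool) : Prop := FnComputableIn (fun n => natOfBool (B n)) A

/-- Turing equivalence. -/
def TuringEquiv (A B : ℕ → Bool) : Prop := TuringLE A B ∧ TuringLE B A

/-- The Turing join `A ⊕ B`. -/
def joinSet (A B : ℕ → Bool) : ℕ → Bool :=
  fun n => if n % 2 = 0 then A (n / 2) else B (n / 2)

open Classical in
/-- The Turing jump `A′ = {e : Γ_e^A(e)↓}`. -/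
noncomputable def jump (A : ℕ → Bool) : ℕ → Bool :=
  fun e => decide (∃ m, OracleComputes e A e m)

/-- The empty oracle. -/
def emptyOracle : ℕ → Bool := fun _ => false

/-- The halting problem `∅′`. -/
noncomputable def zeroJump : ℕ → Bool := jump emptyOracle

/-- A set is computable iff it is Turing reducible to the empty oracle. -/
def ComputableSet (A : ℕ → Bool) : Prop := TuringLE A emptyOracle

/-- A set of naturals is c.e. in `A`. -/
def CeIn (A : ℕ → Bool) (S : Set ℕ) : Prop :=
  ∃ e, ∀ n, n ∈ S ↔ ∃ m, OracleComputes e A n m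

/-- A set of strings is c.e. in `A`. -/
def CeStrIn (A : ℕ → Bool) (S : Set (List Bool)) : Prop :=
  ∃ e, ∀ σ : List Bool, σ ∈ S ↔ ∃ m, OracleComputes e A (Encodable.encode σ) m

/-- A c.e. set of strings. -/
def CeStr (S : Set (List Bool)) : Prop := CeStrIn emptyOracle S

/-! ### Π⁰₁ classes, Martin-Löf randomness, K-triviality -/

/-- A `Π⁰₁(A)` class: the complement of the union of cylinders over an `A`-c.e.
set of strings. -/
def Pi01In (A : ℕ → Bool) (P : Set (ℕ → Bool)) : Prop :=
  ∃ S : Set (List Bool), CeStrIn A S ∧ P = (openOf S)ᶜ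

/-- A `Π⁰₁` class. -/
def Pi01 (P : Set (ℕ → Bool)) : Prop := Pi01In emptyOracle P

/-- The `n`-th level of the `e`-th `A`-effective sequence of open sets. -/
def testLevel (e : ℕ) (A : ℕ → Bool) (n : ℕ) : Set (ℕ → Bool) :=
  openOf {σ | ∃ m, OracleComputes e A (Nat.pair n (Encodable.encode σ)) m}

/-- A Martin-Löf test relative to `A`: a uniformly `A`-c.e. sequence of open sets
`G n` with `μ(G n) ≤ 2^{-n}`. -/
def MLTestIn (A : ℕ → Bool) (G : ℕ → Set (ℕ → Bool)) : Prop :=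
  (∃ e, ∀ n, G n = testLevel e A n) ∧ ∀ n, μCantor (G n) ≤ 2⁻¹ ^ n

/-- `X` is Martin-Löf random relative to `A`: it passes every `A`-Martin-Löf test. -/
def MLRandomIn (A X : ℕ → Bool) : Prop :=
  ∀ G : ℕ → Set (ℕ → Bool), MLTestIn A G → ∃ n, X ∉ G n

/-- `X` is Martin-Löf random. -/
def MLRandom (X : ℕ → Bool) : Prop := MLRandomIn emptyOracle X

/-- The domain of the `e`-th machine, viewed as a set of binary strings. -/
def machineDom (e : ℕ) : Set (List Bool) :=
  {σ | ((Denumerable.ofNat Nat.Partrec.Code e).eval (Encodable.encode σ)).Dom}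

/-- The `e`-th machine is prefix-free. -/
def PrefixFreeMachine (e : ℕ) : Prop := PrefixFreeSet (machineDom e)

/-- Prefix-free Kolmogorov complexity (defined, up to an additive constant, as the
least `|σ| + 2e + 2` over prefix-free machines `e` and programs `σ` producing `x`). -/
noncomputable def Kcpx (x : ℕ) : ℕ :=
  sInf {k | ∃ e, ∃ σ : List Bool, PrefixFreeMachine e ∧
    x ∈ (Denumerable.ofNat Nat.Partrec.Code e).eval (Encodable.encode σ) ∧
    k = σ.length + 2 * e + 2}

/-- `K(n)` means `K(1^n)`. -/
noncomputable def KofNat (n : ℕ) : ℕ := Kcpx (Encodable.encode (List.replicate n true))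

/-- `A` is K-trivial: `K(A↾n) ≤ K(n) + c` for some constant `c`. -/
def KTrivial (A : ℕ → Bool) : Prop :=
  ∃ c, ∀ n, Kcpx (Encodable.encode (strPrefix A n)) ≤ KofNat n + c

/-!
Write `P = [S]ᶜ` with `S` c.e. The strings `τ` that have a prefix enumerated into `S` within
`|τ|` steps, and are minimal with this property, form a decidable prefix-free set `W` with
`[W] = [S]`, so `∑_{ρ ∈ W} 2^{-|ρ|} = μ[S] < 1`. If no tail of `X` lies in `P`, every tail lies
in `[W]`, so `X` splits into consecutive blocks from `W` and lies in `[W^k]` for every `k`, where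
`W^k` is the set of concatenations of `k` strings of `W`, of weight at most `μ[S]^k`. With
`μ[S]^m ≤ 1/2`, the sets `[W^{mn}]` form a Martin-Löf test that `X` fails.
-/

lemma isPrefixOf_iff {σ : List Bool} {X : ℕ → Bool} :
    IsPrefixOf σ X ↔ strPrefix X σ.length = σ := by
  constructor
  · intro h
    refine List.ext_getElem (by simp [strPrefix]) fun i hi hi' => ?_
    simpa [strPrefix] using h ⟨i, hi'⟩
  · intro h i
    have := List.getElem_of_eq h (i := i) (by simp [strPrefix])
    simpa [strPrefix] using this

lemma isPrefixOf_strPrefix (X : ℕ → Bool) (n : ℕ) : IsPrefixOf (strPrefix X n) X := by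
  rw [isPrefixOf_iff]
  simp [strPrefix]

lemma strPrefix_add (X : ℕ → Bool) (m n : ℕ) :
    strPrefix X (m + n) = strPrefix X m ++ strPrefix (tailSeq X m) n := by
  simp [strPrefix, tailSeq, List.range_add, Nat.add_comm]

lemma take_strPrefix (X : ℕ → Bool) {m n : ℕ} (h : m ≤ n) :
    (strPrefix X n).take m = strPrefix X m := by
  simp [strPrefix, ← List.map_take, List.take_range, Nat.min_eq_left h]

lemma isPrefixOf_cons {b : Bool} {σ : List Bool} {X : ℕ → Bool} :
    IsPrefixOf (b :: σ) X ↔ X 0 = b ∧ IsPrefixOf σ (tailSeq X 1) := by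
  simp only [isPrefixOf_iff, List.length_cons, Nat.add_comm σ.length 1, strPrefix_add]
  simp [strPrefix]

lemma isPrefixOf_append {σ ρ : List Bool} {X : ℕ → Bool} (hσ : IsPrefixOf σ X)
    (hρ : IsPrefixOf ρ (tailSeq X σ.length)) : IsPrefixOf (σ ++ ρ) X := by
  rw [isPrefixOf_iff] at *
  rw [List.length_append, strPrefix_add, hσ, hρ]

lemma isPrefixOf_emptyOracle {σ : List Bool} :
    IsPrefixOf σ emptyOracle ↔ ∃ k, σ = strPrefix emptyOracle k := by
  refine ⟨fun h => ⟨σ.length, (isPrefixOf_iff.1 h).symm⟩, ?_⟩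
  rintro ⟨k, rfl⟩
  exact isPrefixOf_strPrefix _ k

lemma cylinder_nil : cylinder [] = Set.univ :=
  Set.eq_univ_of_forall fun _ i => i.elim0

lemma cylinder_subset_of_prefix {σ τ : List Bool} (h : σ <+: τ) : cylinder τ ⊆ cylinder σ := by
  intro X hX
  simp only [_root_.cylinder, Set.mem_ofPred_eq, isPrefixOf_iff] at hX ⊢
  rw [← take_strPrefix X h.length_le, hX]
  exact (List.prefix_iff_eq_take.1 h).symm

lemma prefix_of_isPrefixOf {σ τ : List Bool} {X : ℕ → Bool} (hσ : IsPrefixOf σ X)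
    (hτ : IsPrefixOf τ X) (h : σ.length ≤ τ.length) : σ <+: τ := by
  rw [isPrefixOf_iff] at hσ hτ
  rw [← hσ, ← hτ, ← take_strPrefix X h]
  exact List.take_prefix _ _

lemma disjoint_cylinder {σ τ : List Bool} (hστ : ¬ σ <+: τ) (hτσ : ¬ τ <+: σ) :
    Disjoint (cylinder σ) (cylinder τ) := by
  refine Set.disjoint_left.2 fun X hσ hτ => ?_
  rcases le_total σ.length τ.length with h | h
  · exact hστ (prefix_of_isPrefixOf hσ hτ h)
  · exact hτσ (prefix_of_isPrefixOf hτ hσ h)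

lemma binaryDigits_succ (x : ℝ) (n : ℕ) :
    binaryDigits x (n + 1) = binaryDigits (Int.fract (2 * x)) n := by
  have hshift : Int.fract (2 * x) * 2 ^ (n + 1)
      = x * 2 ^ (n + 1 + 1) - ((⌊2 * x⌋ * 2 ^ (n + 1) : ℤ) : ℝ) := by
    rw [Int.fract]; push_cast; ring
  have heven : (2 : ℤ) ∣ ⌊2 * x⌋ * 2 ^ (n + 1) := ⟨⌊2 * x⌋ * 2 ^ n, by ring⟩
  rw [binaryDigits, binaryDigits, hshift, Int.floor_sub_intCast]
  generalize ⌊2 * x⌋ * 2 ^ (n + 1) = c at heven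
  simp only [decide_eq_decide]
  omega

lemma two_mul_sub_mem_Ico_iff {x : ℝ} {b : Bool} :
    2 * x - b.toNat ∈ Set.Ico (0 : ℝ) 1 ↔ x ∈ Set.Ico (0 : ℝ) 1 ∧ binaryDigits x 0 = b := by
  have hb : (b.toNat : ℝ) = 0 ∨ (b.toNat : ℝ) = 1 := by cases b <;> simp
  rw [binaryDigits, pow_one, mul_comm x 2, Set.mem_Ico, Set.mem_Ico]
  constructor
  · rintro ⟨h0, h1⟩
    have hfl : ⌊2 * x⌋ = b.toNat :=
      Int.floor_eq_iff.2 (by push_cast; constructor <;> linarith)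
    refine ⟨by rcases hb with hb | hb <;> constructor <;> linarith, ?_⟩
    rw [hfl]; cases b <;> decide
  · rintro ⟨⟨h0, h1⟩, hd⟩
    have l0 : (0 : ℤ) ≤ ⌊2 * x⌋ := Int.le_floor.2 (by push_cast; linarith)
    have l1 : ⌊2 * x⌋ < 2 := Int.floor_lt.2 (by push_cast; linarith)
    have hfl : ⌊2 * x⌋ = b.toNat := by
      generalize ⌊2 * x⌋ = z at l0 l1 hd
      cases b <;> simp at hd ⊢ <;> omega
    have := Int.floor_eq_iff.1 hfl
    push_cast at this
    constructor <;> linarith [this.1, this.2]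

lemma preimage_cylinder_cons (b : Bool) (σ : List Bool) :
    binaryDigits ⁻¹' cylinder (b :: σ) ∩ Set.Ico 0 1
      = (fun x : ℝ => 2 * x - b.toNat) ⁻¹' (binaryDigits ⁻¹' cylinder σ ∩ Set.Ico 0 1) := by
  ext x
  simp only [Set.mem_inter_iff, Set.mem_preimage, _root_.cylinder, Set.mem_ofPred_eq,
    isPrefixOf_cons, two_mul_sub_mem_Ico_iff]
  by_cases hx : x ∈ Set.Ico (0 : ℝ) 1 ∧ binaryDigits x 0 = b
  · have hfract : Int.fract (2 * x) = 2 * x - b.toNat :=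
      Int.fract_eq_iff.2 ⟨(two_mul_sub_mem_Ico_iff.2 hx).1, (two_mul_sub_mem_Ico_iff.2 hx).2,
        b.toNat, by push_cast; ring⟩
    have htail : tailSeq (binaryDigits x) 1 = binaryDigits (2 * x - b.toNat) := by
      funext n; rw [tailSeq, binaryDigits_succ, hfract]
    rw [htail]; tauto
  · tauto

lemma volume_preimage_two_mul_sub (c : ℝ) (s : Set ℝ) :
    volume ((fun x => 2 * x - c) ⁻¹' s) = 2⁻¹ * volume s := by
  change volume ((fun x => 2 * x) ⁻¹' ((fun y => y + -c) ⁻¹' s)) = _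
  rw [Real.volume_preimage_mul_left two_ne_zero, measure_preimage_add_right,
    abs_of_pos (by norm_num), ENNReal.ofReal_inv_of_pos two_pos, ENNReal.ofReal_ofNat]

lemma volume_preimage_cylinder (σ : List Bool) :
    volume (binaryDigits ⁻¹' cylinder σ ∩ Set.Ico 0 1) = 2⁻¹ ^ σ.length := by
  induction σ with
  | nil => simp [cylinder_nil]
  | cons b σ ih =>
    rw [preimage_cylinder_cons, volume_preimage_two_mul_sub, ih, List.length_cons, pow_succ']

lemma measurable_binaryDigits : Measurable binaryDigits :=
  measurable_pi_lambda _ fun n => (measurable_from_top (f := fun z : ℤ => decide (z % 2 = 1))).comp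
    (Int.measurable_floor.comp (measurable_id.mul_const (2 ^ (n + 1) : ℝ)))

lemma measurableSet_cylinder (σ : List Bool) : MeasurableSet (cylinder σ) := by
  have : cylinder σ = ⋂ i : Fin σ.length, (fun X : ℕ → Bool => X i) ⁻¹' {σ.get i} := by
    ext X; simp [_root_.cylinder, IsPrefixOf]
  rw [this]
  exact .iInter fun i => measurable_pi_apply _ (measurableSet_singleton _)

lemma measurableSet_openOf (S : Set (List Bool)) : MeasurableSet (openOf S) :=
  .biUnion S.to_countable fun σ _ => measurableSet_cylinder σ

lemma μCantor_cylinder (σ : List Bool) : μCantor (cylinder σ) = 2⁻¹ ^ σ.length := by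
  rw [μCantor, Measure.map_apply measurable_binaryDigits (measurableSet_cylinder σ),
    Measure.restrict_apply (measurable_binaryDigits (measurableSet_cylinder σ)),
    volume_preimage_cylinder]

instance : IsProbabilityMeasure μCantor :=
  ⟨by simpa [cylinder_nil] using μCantor_cylinder []⟩

lemma openOf_eq_iUnion (S : Set (List Bool)) : openOf S = ⋃ σ : S, cylinder σ :=
  Set.biUnion_eq_iUnion _ _

lemma μCantor_openOf_le_weight (S : Set (List Bool)) : μCantor (openOf S) ≤ weight S := by
  rw [openOf_eq_iUnion]
  exact (measure_iUnion_le _).trans (ENNReal.tsum_le_tsum fun σ => (μCantor_cylinder σ).le)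

lemma μCantor_openOf_of_prefixFree {S : Set (List Bool)} (hS : PrefixFreeSet S) :
    μCantor (openOf S) = weight S := by
  rw [openOf_eq_iUnion, measure_iUnion ?_ fun σ => measurableSet_cylinder _]
  · exact tsum_congr fun σ => μCantor_cylinder σ
  · intro σ τ hne
    have hne' : (σ : List Bool) ≠ τ := fun h => hne (Subtype.ext h)
    exact disjoint_cylinder (fun h => hne' (hS _ σ.2 _ τ.2 h))
      (fun h => hne' (hS _ τ.2 _ σ.2 h).symm)

lemma weight_image2_append_le (A B : Set (List Bool)) :
    weight (Set.image2 (· ++ ·) A B) ≤ weight A * weight B := by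
  have hsurj : Function.Surjective fun p : A × B =>
      (⟨p.1 ++ p.2, Set.mem_image2_of_mem p.1.2 p.2.2⟩ : Set.image2 (· ++ ·) A B) := by
    rintro ⟨_, a, ha, b, hb, rfl⟩
    exact ⟨(⟨a, ha⟩, ⟨b, hb⟩), rfl⟩
  calc weight (Set.image2 (· ++ ·) A B)
      ≤ ∑' p : A × B, (2⁻¹ : ℝ≥0∞) ^ ((p.1 : List Bool) ++ p.2).length :=
        ENNReal.tsum_le_tsum_comp_of_surjective hsurj _
    _ = ∑' (a : A) (b : B),
          (2⁻¹ : ℝ≥0∞) ^ (a : List Bool).length * 2⁻¹ ^ (b : List Bool).length := by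
        simp only [List.length_append, pow_add]
        exact ENNReal.tsum_prod (f := fun (a : A) (b : B) =>
          (2⁻¹ : ℝ≥0∞) ^ (a : List Bool).length * 2⁻¹ ^ (b : List Bool).length)
    _ = weight A * weight B := by
        simp only [weight, ENNReal.tsum_mul_left, ENNReal.tsum_mul_right]

def concatPow (W : Set (List Bool)) : ℕ → Set (List Bool)
  | 0 => {[]}
  | k + 1 => Set.image2 (· ++ ·) W (concatPow W k)

lemma weight_concatPow_le (W : Set (List Bool)) (k : ℕ) :
    weight (concatPow W k) ≤ weight W ^ k := by
  induction k with
  | zero => simp [concatPow, weight]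
  | succ k ih =>
    calc weight (concatPow W (k + 1)) ≤ weight W * weight (concatPow W k) :=
          weight_image2_append_le _ _
      _ ≤ weight W ^ (k + 1) := by rw [pow_succ']; gcongr

lemma mem_concatPow_iff {W : Set (List Bool)} {k : ℕ} {σ : List Bool} :
    σ ∈ concatPow W k ↔
      ∃ L : List (List Bool), L.length = k ∧ (∀ ρ ∈ L, ρ ∈ W) ∧ L.flatten = σ := by
  induction k generalizing σ with
  | zero => simp [concatPow, eq_comm]
  | succ k ih =>
    simp only [concatPow, Set.mem_image2, ih]
    constructor
    · rintro ⟨ρ, hρ, _, ⟨L, rfl, hL, rfl⟩, rfl⟩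
      exact ⟨ρ :: L, rfl, by simpa using ⟨hρ, hL⟩, rfl⟩
    · rintro ⟨_ | ⟨ρ, L⟩, hlen, hL, rfl⟩
      · simp at hlen
      · simp only [List.mem_cons, forall_eq_or_imp] at hL
        exact ⟨ρ, hL.1, _, ⟨L, by simpa using hlen, hL.2, rfl⟩, rfl⟩

lemma tailSeq_tailSeq (X : ℕ → Bool) (j k : ℕ) : tailSeq (tailSeq X j) k = tailSeq X (k + j) := by
  funext n; simp [tailSeq, Nat.add_assoc]

lemma mem_openOf_concatPow {W : Set (List Bool)} {X : ℕ → Bool}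
    (hX : ∀ k, tailSeq X k ∈ openOf W) (r : ℕ) : X ∈ openOf (concatPow W r) := by
  induction r generalizing X with
  | zero => exact Set.mem_iUnion₂.2 ⟨[], rfl, cylinder_nil ▸ Set.mem_univ X⟩
  | succ r ih =>
    obtain ⟨ρ, hρ, hXρ⟩ := Set.mem_iUnion₂.1 (hX 0)
    obtain ⟨σ, hσ, hσX⟩ := Set.mem_iUnion₂.1
      (ih (X := tailSeq X ρ.length) fun k => by rw [tailSeq_tailSeq]; exact hX _)
    exact Set.mem_iUnion₂.2 ⟨ρ ++ σ, Set.mem_image2_of_mem hρ hσ, isPrefixOf_append hXρ hσX⟩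

section MinimalHits

variable (stage : ℕ → List Bool → Prop)

/-- Only stage `|τ|` is consulted, so that `minimalHits stage` is decidable when `stage` is. -/
def HitBy (τ : List Bool) : Prop := ∃ i ≤ τ.length, stage τ.length (τ.take i)

def minimalHits : Set (List Bool) :=
  {τ | HitBy stage τ ∧ ∀ i < τ.length, ¬ HitBy stage (τ.take i)}

variable {stage}

lemma prefixFree_minimalHits : PrefixFreeSet (minimalHits stage) := by
  intro σ hσ τ hτ hστ
  by_contra hne
  have hlt : σ.length < τ.length :=
    lt_of_le_of_ne hστ.length_le fun h => hne (hστ.eq_of_length h)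
  exact hτ.2 σ.length hlt (List.prefix_iff_eq_take.1 hστ ▸ hσ.1)

lemma openOf_minimalHits (hmono : Monotone stage) :
    openOf (minimalHits stage) = openOf {σ | ∃ t, stage t σ} := by
  apply subset_antisymm
  · refine Set.iUnion₂_subset fun τ hτ => ?_
    obtain ⟨i, -, hi⟩ := hτ.1
    exact (cylinder_subset_of_prefix (List.take_prefix i τ)).trans
      (Set.subset_biUnion_of_mem (u := cylinder) ⟨_, hi⟩)
  · refine Set.iUnion₂_subset fun σ ⟨t, hσ⟩ X hX => ?_
    classical
    have hhit : ∃ n, HitBy stage (strPrefix X n) := by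
      refine ⟨max t σ.length, σ.length, by simp [strPrefix], ?_⟩
      rw [take_strPrefix X (le_max_right _ _), isPrefixOf_iff.1 hX]
      simpa [strPrefix] using hmono (le_max_left t σ.length) σ hσ
    refine Set.mem_iUnion₂.2 ⟨strPrefix X (Nat.find hhit), ⟨Nat.find_spec hhit, fun i hi => ?_⟩,
      isPrefixOf_strPrefix X _⟩
    have hi' : i < Nat.find hhit := by simpa [strPrefix] using hi
    rw [take_strPrefix X hi'.le]
    exact Nat.find_min hhit hi'

lemma primrecPred_minimalHits (hstage : PrimrecRel stage) :
    PrimrecPred (· ∈ minimalHits stage) := by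
  have hhit : PrimrecPred (HitBy stage) := by
    have hR : PrimrecRel fun (i : ℕ) (τ : List Bool) => stage τ.length (τ.take i) :=
      hstage.comp (Primrec.list_length.comp .snd) (Primrec.list_take.comp .fst .snd)
    exact (hR.exists_mem_list.comp
      (Primrec.list_range.comp (Primrec.succ.comp Primrec.list_length)) Primrec.id).of_eq
      fun τ => by simp [HitBy]
  have hmin : PrimrecRel fun (i : ℕ) (τ : List Bool) => ¬ HitBy stage (τ.take i) :=
    hhit.not.comp (Primrec.list_take.comp .fst .snd)
  exact hhit.and <| (hmin.forall_mem_list.comp (Primrec.list_range.comp Primrec.list_length)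
    Primrec.id).of_eq fun τ => by simp

end MinimalHits

open Nat.Partrec (Code)

lemma wEnum_iff_exists_evaln {e y : ℕ} :
    WEnum e y ↔ ∃ k, (Code.evaln k (Denumerable.ofNat Code e) y).isSome := by
  simp only [WEnum, Part.dom_iff_mem, Code.evaln_complete, Option.isSome_iff_exists]
  exact ⟨fun ⟨v, k, hv⟩ => ⟨k, v, hv⟩, fun ⟨k, v, hv⟩ => ⟨v, k, hv⟩⟩

lemma oracleComputes_emptyOracle_iff {e x m : ℕ} :
    OracleComputes e emptyOracle x m ↔
      ∃ k, WEnum e (Nat.pair (Encodable.encode (strPrefix emptyOracle k)) (Nat.pair x m)) := by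
  simp only [OracleComputes, isPrefixOf_emptyOracle]
  exact ⟨fun ⟨_, ⟨k, rfl⟩, h⟩ => ⟨k, h⟩, fun ⟨k, h⟩ => ⟨_, ⟨k, rfl⟩, h⟩⟩

/-- `y` codes the length of the oracle string `0^k` used and the output `m`. -/
def enumStage (e t x : ℕ) : Prop :=
  ∃ y < t, (Code.evaln t (Denumerable.ofNat Code e)
    (Nat.pair (Encodable.encode (strPrefix emptyOracle y.unpair.1)) (Nat.pair x y.unpair.2))).isSome

lemma enumStage_mono (e : ℕ) : Monotone (enumStage e) := by
  intro t t' htt' x hx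
  obtain ⟨y, hy, hsome⟩ := hx
  obtain ⟨v, hv⟩ := Option.isSome_iff_exists.1 hsome
  exact ⟨y, hy.trans_le htt', Option.isSome_iff_exists.2 ⟨v, Code.evaln_mono htt' hv⟩⟩

lemma exists_oracleComputes_emptyOracle_iff {e x : ℕ} :
    (∃ m, OracleComputes e emptyOracle x m) ↔ ∃ t, enumStage e t x := by
  simp only [oracleComputes_emptyOracle_iff, wEnum_iff_exists_evaln]
  constructor
  · rintro ⟨m, k, t, hsome⟩
    obtain ⟨v, hv⟩ := Option.isSome_iff_exists.1 hsome
    refine ⟨max t (Nat.pair k m + 1), Nat.pair k m, by omega,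
      Option.isSome_iff_exists.2 ⟨v, ?_⟩⟩
    simpa using Code.evaln_mono (le_max_left t (Nat.pair k m + 1)) hv
  · rintro ⟨t, y, -, hsome⟩
    exact ⟨_, _, t, hsome⟩

lemma primrecRel_enumStage (e : ℕ) : PrimrecRel (enumStage e) := by
  have hstring : Primrec fun k : ℕ => strPrefix emptyOracle k :=
    Primrec.list_map Primrec.list_range (Primrec.const false).to₂
  have harg : Primrec fun p : ℕ × ℕ × ℕ =>
      Nat.pair (Encodable.encode (strPrefix emptyOracle p.1.unpair.1))
        (Nat.pair p.2.2 p.1.unpair.2) :=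
    Primrec₂.natPair.comp
      (Primrec.encode.comp (hstring.comp (Primrec.fst.comp (Primrec.unpair.comp .fst))))
      (Primrec₂.natPair.comp (Primrec.snd.comp .snd)
        (Primrec.snd.comp (Primrec.unpair.comp .fst)))
  have hR : PrimrecRel fun (y : ℕ) (q : ℕ × ℕ) =>
      (Code.evaln q.1 (Denumerable.ofNat Code e) (Nat.pair
        (Encodable.encode (strPrefix emptyOracle y.unpair.1)) (Nat.pair q.2 y.unpair.2))).isSome :=
    Primrec.eq.comp (Primrec.option_isSome.comp (Code.primrec_evaln.comp
      (((Primrec.fst.comp .snd).pair (Primrec.const _)).pair harg))) (Primrec.const true)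
  exact (hR.exists_mem_list.comp (Primrec.list_range.comp .fst) Primrec.id).of_eq
    fun q => by simp only [id, enumStage, List.mem_range]

lemma exists_prefixFree_primrec_openOf_eq {S : Set (List Bool)} (hS : CeStr S) :
    ∃ W : Set (List Bool), PrimrecPred (· ∈ W) ∧ PrefixFreeSet W ∧ openOf W = openOf S := by
  obtain ⟨e, he⟩ := hS
  let stage : ℕ → List Bool → Prop := fun t σ => enumStage e t (Encodable.encode σ)
  have hS' : S = {σ | ∃ t, stage t σ} := by
    ext σ; rw [he, exists_oracleComputes_emptyOracle_iff]; rfl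
  refine ⟨minimalHits stage, primrecPred_minimalHits ?_, prefixFree_minimalHits,
    hS' ▸ openOf_minimalHits fun s t hst σ => enumStage_mono e hst _⟩
  exact (primrecRel_enumStage e).comp .fst (Primrec.encode.comp .snd)

lemma exists_code_oracleComputes_emptyOracle_iff {α β : Type*} [Primcodable α] [Primcodable β]
    {R : α → β → Prop} (hR : PrimrecRel R) :
    ∃ e, ∀ a, (∃ m, OracleComputes e emptyOracle (Encodable.encode a) m) ↔ ∃ b, R a b := by
  classical
  -- on input `⟪ρ, ⟪x, m⟫⟫` the oracle string `ρ` is ignored and `m` is decoded as the witness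
  let g : ℕ → Option ℕ := fun y =>
    (Encodable.decode (α := α) y.unpair.2.unpair.1).bind fun a =>
      (Encodable.decode (α := β) y.unpair.2.unpair.2).bind fun b =>
        if R a b then some 0 else none
  have hg : Primrec g := by
    have hdecα : Primrec fun y : ℕ => Encodable.decode (α := α) y.unpair.2.unpair.1 :=
      Primrec.decode.comp (Primrec.fst.comp (Primrec.unpair.comp
        (Primrec.snd.comp Primrec.unpair)))
    have hdecβ : Primrec fun y : ℕ => Encodable.decode (α := β) y.unpair.2.unpair.2 :=
      Primrec.decode.comp (Primrec.snd.comp (Primrec.unpair.comp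
        (Primrec.snd.comp Primrec.unpair)))
    refine Primrec.option_bind hdecα (Primrec.option_bind (hdecβ.comp .fst)
      (g := fun (p : ℕ × α) (b : β) => if R p.2 b then some 0 else none) ?_).to₂
    exact (Primrec.ite (hR.comp (Primrec.snd.comp .fst) .snd) (Primrec.const _)
      (Primrec.const _)).to₂
  obtain ⟨c, hc⟩ := Nat.Partrec.Code.exists_code.1
    (Partrec.nat_iff.1 (Computable.ofOption hg.to_comp))
  refine ⟨Encodable.encode c, fun a => ?_⟩
  have hW : ∀ y, WEnum (Encodable.encode c) y ↔ (g y).isSome := by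
    intro y; rw [WEnum, Denumerable.ofNat_encode, hc, Part.ofOption_dom]
  simp only [OracleComputes, hW, g, Nat.unpair_pair, Encodable.encodek, Option.bind_some]
  constructor
  · rintro ⟨m, ρ, -, hsome⟩
    cases hm : (Encodable.decode m : Option β) with
    | none => simp [hm] at hsome
    | some b => exact ⟨b, by simpa [hm] using hsome⟩
  · rintro ⟨b, hb⟩
    exact ⟨Encodable.encode b, [], fun i => i.elim0, by simp [hb]⟩

lemma exists_testLevel_eq_openOf_concatPow {W : Set (List Bool)} (hW : PrimrecPred (· ∈ W))
    (m₀ : ℕ) : ∃ e, ∀ n, testLevel e emptyOracle n = openOf (concatPow W (m₀ * n)) := by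
  have hR : PrimrecRel fun (q : ℕ × List Bool) (L : List (List Bool)) =>
      L.length = m₀ * q.1 ∧ (∀ ρ ∈ L, ρ ∈ W) ∧ L.flatten = q.2 :=
    (Primrec.eq.comp (Primrec.list_length.comp .snd)
        (Primrec.nat_mul.comp (Primrec.const m₀) (Primrec.fst.comp .fst))).and
      ((hW.forall_mem_list.comp .snd).and
        (Primrec.eq.comp (Primrec.list_flatten.comp .snd) (Primrec.snd.comp .fst)))
  obtain ⟨e, he⟩ := exists_code_oracleComputes_emptyOracle_iff hR
  refine ⟨e, fun n => congrArg openOf (Set.ext fun σ => ?_)⟩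
  simpa [mem_concatPow_iff] using he (n, σ)

lemma exists_mlTest_openOf_concatPow {W : Set (List Bool)} (hW : PrimrecPred (· ∈ W))
    (hw : weight W < 1) :
    ∃ G, MLTestIn emptyOracle G ∧ ∀ n, ∃ r, G n = openOf (concatPow W r) := by
  obtain ⟨m₀, hm₀⟩ : ∃ m₀ : ℕ, weight W ^ m₀ < 2⁻¹ :=
    ((ENNReal.tendsto_pow_atTop_nhds_zero_of_lt_one hw).eventually
      (gt_mem_nhds (by norm_num))).exists
  obtain ⟨e, he⟩ := exists_testLevel_eq_openOf_concatPow hW m₀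
  refine ⟨testLevel e emptyOracle, ⟨⟨e, fun n => rfl⟩, fun n => ?_⟩, fun n => ⟨_, he n⟩⟩
  calc μCantor (testLevel e emptyOracle n) ≤ weight (concatPow W (m₀ * n)) :=
        he n ▸ μCantor_openOf_le_weight _
    _ ≤ (weight W ^ m₀) ^ n := pow_mul (weight W) m₀ n ▸ weight_concatPow_le W _
    _ ≤ 2⁻¹ ^ n := by gcongr

/-- Kučera: every Martin-Löf random sequence has a tail in any
`Π⁰₁` class of positive measure. -/
theorem stmt6 (P : Set (ℕ → Bool)) (hP : Pi01 P) (hpos : 0 < μCantor P)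
    (X : ℕ → Bool) (hX : MLRandom X) :
    ∃ k, tailSeq X k ∈ P := by
  obtain ⟨S, hS, rfl⟩ := hP
  obtain ⟨W, hWrec, hWpf, hWS⟩ := exists_prefixFree_primrec_openOf_eq hS
  have hw : weight W < 1 := by
    rw [← μCantor_openOf_of_prefixFree hWpf, hWS]
    rwa [prob_compl_eq_one_sub (measurableSet_openOf S), tsub_pos_iff_lt] at hpos
  obtain ⟨G, hG, hGW⟩ := exists_mlTest_openOf_concatPow hWrec hw
  by_contra! htails
  obtain ⟨n, hn⟩ := hX G hG
  obtain ⟨r, hr⟩ := hGW n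
  exact hn (hr ▸ mem_openOf_concatPow (fun k => hWS ▸ not_not.1 (htails k)) r)
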